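/- arXiv:1203.6055 — 3 statements merged into one kernel-verified Lean document; each statement's English description precedes it below -/
import Mathlib

section
/- Index-reduction formula: for all integers a, b, c, d, r with a + b = c + d, F_a(x,y)·F_b(x,y) − F_c(x,y)·F_d(x,y) = (−y)^r · ( F_{a−r}(x,y)·F_{b−r}(x,y) − F_{c−r}(x,y)·F_{d−r}(x,y) ), where the F_n are the bivariate Fibonacci polynomials extended to all integer indices (y invertible). -/
/-- Bivariate Fibonacci polynomials. -/
def bF {K : Type*} [Field K] (x y : K) : ℕ → K
  | 0 => 0
  | 1 => 1
  | n + 2 => x * bF x y (n + 1) + y * bF x y n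

/-- Bivariate Fibonacci polynomials extended to all integer indices:
F_{-n} = -(-y)^{-n} F_n. -/
noncomputable def zF {K : Type*} [Field K] (x y : K) (n : ℤ) : K :=
  if 0 ≤ n then bF x y n.toNat else -((-y) ^ n) * bF x y (-n).toNat

/-! The extended sequence still satisfies `F (n + 2) = x F (n + 1) + y F n` at every integer `n`,
hence the addition formula `F (m + n) = F m F (n + 1) + y F (m - 1) F n` on all of `ℤ`. Applied
twice it gives `F a F b + y F (a - 1) F (b - 1) = F (a + b - 1) = F c F d + y F (c - 1) F (d - 1)`,
so lowering all four indices by one multiplies `F a F b - F c F d` by `-y`; iterating `r` times,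
in either direction, produces the factor `(-y) ^ r`. -/

theorem eq_zpow_mul_of_forall_eq_mul {G : Type*} [CommGroupWithZero G] {u : G} (hu : u ≠ 0)
    {f : ℤ → G} (hf : ∀ n, f (n + 1) = u * f n) (n : ℤ) : f n = u ^ n * f 0 := by
  induction n using Int.induction_on with
  | zero => simp
  | succ k ih => rw [hf, ih, zpow_add_one₀ hu, mul_comm (u ^ _) u, mul_assoc]
  | pred k ih =>
    rw [(eq_inv_mul_iff_mul_eq₀ hu).2 (hf _).symm, sub_add_cancel, ih, zpow_sub_one₀ hu,
      mul_comm (u ^ _) u⁻¹, mul_assoc]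

section Fibonacci

variable {K : Type*} [Field K] (x y : K)

theorem zF_natCast (n : ℕ) : zF x y n = bF x y n := by
  simp [zF]

theorem zF_neg_natCast (n : ℕ) : zF x y (-n) = -(-y) ^ (-n : ℤ) * bF x y n := by
  rcases n with _ | n
  · simp [zF, bF]
  · rw [zF, if_neg (by omega)]
    simp

theorem zF_add_two (hy : y ≠ 0) (n : ℤ) :
    zF x y (n + 2) = x * zF x y (n + 1) + y * zF x y n := by
  rcases le_or_gt (-1) n with hn | hn
  · rcases hn.eq_or_lt with rfl | hn
    · simp [zF, bF, hy]
    · lift n to ℕ using (by omega)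
      have h2 := zF_natCast x y (n + 2)
      have h1 := zF_natCast x y (n + 1)
      push_cast at h1 h2
      rw [h2, h1, zF_natCast, bF]
  · obtain ⟨m, rfl⟩ : ∃ m : ℕ, n = -(m + 2 : ℕ) := ⟨(-n - 2).toNat, by omega⟩
    rw [show -((m + 2 : ℕ) : ℤ) + 2 = -m by push_cast; ring,
      show -((m + 2 : ℕ) : ℤ) + 1 = -(m + 1 : ℕ) by push_cast; ring,
      zF_neg_natCast, zF_neg_natCast, zF_neg_natCast, bF]
    simp only [zpow_neg, zpow_natCast, pow_succ]
    field_simp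
    ring

theorem zF_add (hy : y ≠ 0) (m n : ℤ) :
    zF x y (m + n) = zF x y m * zF x y (n + 1) + y * zF x y (m - 1) * zF x y n := by
  have hrec (k : ℤ) : zF x y (k + 1) = x * zF x y k + y * zF x y (k - 1) := by
    have h := zF_add_two x y hy (k - 1)
    rwa [sub_add_cancel, show k - 1 + 2 = k + 1 by ring] at h
  induction m using Int.induction_on generalizing n with
  | zero => simp [zF, bF, hy]
  | succ k ih =>
    rw [add_right_comm, add_assoc, ih, hrec (n + 1), hrec k]
    simp only [add_sub_cancel_right]
    ring
  | pred k ih =>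
    have h1 := hrec (-k - 1)
    have h2 := hrec n
    have h3 := ih (n - 1)
    rw [sub_add_cancel] at h1 h3
    rw [show -(k : ℤ) - 1 + n = -k + (n - 1) by ring, h3]
    linear_combination zF x y n * h1 - zF x y (-k - 1) * h2

theorem zF_mul_sub_zF_mul_of_add_eq {a b c d : ℤ} (hy : y ≠ 0) (h : a + b = c + d) :
    zF x y a * zF x y b - zF x y c * zF x y d =
      -y * (zF x y (a - 1) * zF x y (b - 1) - zF x y (c - 1) * zF x y (d - 1)) := by
  have hab := zF_add x y hy a (b - 1)
  have hcd := zF_add x y hy c (d - 1)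
  rw [sub_add_cancel] at hab hcd
  rw [← add_sub_assoc, h, add_sub_assoc] at hab
  linear_combination hcd - hab

end Fibonacci

/-- Index-reduction formula: if a + b = c + d then
F_a F_b − F_c F_d = (−y)^r (F_{a−r} F_{b−r} − F_{c−r} F_{d−r}). -/
theorem fib_index_reduction {K : Type*} [Field K] (x y : K) (hy : y ≠ 0)
    (a b c d r : ℤ) (h : a + b = c + d) :
    zF x y a * zF x y b - zF x y c * zF x y d =
      (-y) ^ r * (zF x y (a - r) * zF x y (b - r) - zF x y (c - r) * zF x y (d - r)) := by
  let D (k : ℤ) : K :=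
    zF x y (a - r + k) * zF x y (b - r + k) - zF x y (c - r + k) * zF x y (d - r + k)
  have hD : ∀ k, D (k + 1) = -y * D k := fun k => by
    simpa only [D, ← add_assoc, add_sub_cancel_right] using
      zF_mul_sub_zF_mul_of_add_eq x y (a := a - r + k + 1) (b := b - r + k + 1)
        (c := c - r + k + 1) (d := d - r + k + 1) hy (by omega)
  simpa [D] using eq_zpow_mul_of_forall_eq_mul (neg_ne_zero.2 hy) hD r
end

section
/- Pascal-type recurrence for bivariate s-Fibopolynomials: for s ≥ 1, n ≥ 1 and 1 ≤ k ≤ n−1, C(n,k)_{F_s} = F_{s(n−k)+1}(x,y)·C(n−1,k−1)_{F_s} + y·F_{sk−1}(x,y)·C(n−1,k)_{F_s}, where C(n,k)_{F_s} = (F_{sn}·F_{s(n−1)}···F_{s(n−k+1)})/(F_s·F_{2s}···F_{ks}) (all arguments (x,y)). -/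
/-- The bivariate s-Fibopolynomial
C(n,k)_{F_s} = ∏_{i=0}^{k-1} F_{s(n-i)} / ∏_{i=1}^{k} F_{si}. -/
noncomputable def fibo {K : Type*} [Field K] (x y : K) (s n k : ℕ) : K :=
  (∏ i ∈ Finset.range k, bF x y (s * (n - i))) / ∏ i ∈ Finset.range k, bF x y (s * (i + 1))

/-- The field ℚ(x,y) of rational functions in two variables. -/
noncomputable abbrev RF2 : Type := FractionRing (MvPolynomial (Fin 2) ℚ)

noncomputable def Xv : RF2 := algebraMap (MvPolynomial (Fin 2) ℚ) RF2 (MvPolynomial.X 0)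
noncomputable def Yv : RF2 := algebraMap (MvPolynomial (Fin 2) ℚ) RF2 (MvPolynomial.X 1)


/-! Expanding `F_{s(n+1)} = F_{s(n-k) + s(k+1)}` by the addition formula
`F_{m+h+1} = F_{m+1} F_{h+1} + y F_m F_h` and dividing by the common product of the two
Fibopolynomials on the right gives the recurrence. The only issue over `ℚ(x,y)` is that the
denominators `F_{si}` are nonzero: they are images of polynomials which specialize to the
Fibonacci numbers at `x = y = 1`. -/

section Field

variable {K : Type*} [Field K] (x y : K)

@[simp]
theorem bF_zero : bF x y 0 = 0 := rfl

@[simp]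
theorem bF_one : bF x y 1 = 1 := rfl

theorem bF_add_two (n : ℕ) : bF x y (n + 2) = x * bF x y (n + 1) + y * bF x y n := rfl

theorem bF_add_add_one (m h : ℕ) :
    bF x y (m + h + 1) = bF x y (m + 1) * bF x y (h + 1) + y * bF x y m * bF x y h := by
  induction m generalizing h with
  | zero => simp
  | succ m ih =>
    rw [show m + 1 + h + 1 = m + (h + 1) + 1 by ring, ih, bF_add_two, bF_add_two]
    ring

theorem fibo_succ_pascal {s n k : ℕ} (hkn : k < n)
    (hden : ∀ i ∈ Finset.range (k + 1), bF x y (s * (i + 1)) ≠ 0) :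
    fibo x y s (n + 1) (k + 1) =
      bF x y (s * (n - k) + 1) * fibo x y s n k +
        y * bF x y (s * (k + 1) - 1) * fibo x y s n (k + 1) := by
  have hFk : bF x y (s * (k + 1)) ≠ 0 := hden k (Finset.self_mem_range_succ k)
  have hsk : s * (k + 1) ≠ 0 := fun h => hFk (by rw [h, bF_zero])
  have hsplit : s * (n + 1) = s * (n - k) + (s * (k + 1) - 1) + 1 := by
    rw [add_assoc, Nat.sub_add_cancel (Nat.one_le_iff_ne_zero.mpr hsk), ← mul_add]
    congr 1
    omega
  unfold fibo
  rw [Finset.prod_range_succ', Finset.prod_range_succ, Finset.prod_range_succ (n := k)]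
  simp only [Nat.add_sub_add_right, Nat.sub_zero]
  rw [hsplit, bF_add_add_one, Nat.sub_add_cancel (Nat.one_le_iff_ne_zero.mpr hsk)]
  field_simp

end Field

open MvPolynomial

noncomputable def fibPoly : ℕ → MvPolynomial (Fin 2) ℚ
  | 0 => 0
  | 1 => 1
  | n + 2 => X 0 * fibPoly (n + 1) + X 1 * fibPoly n

theorem map_fibPoly {K : Type*} [Field K] (φ : MvPolynomial (Fin 2) ℚ →+* K) (n : ℕ) :
    φ (fibPoly n) = bF (φ (X 0)) (φ (X 1)) n := by
  induction n using Nat.twoStepInduction with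
  | zero => simp [fibPoly]
  | one => simp [fibPoly]
  | more n ih ih' => simp [fibPoly, bF_add_two, ih, ih']

theorem bF_one_one (n : ℕ) : bF (1 : ℚ) 1 n = Nat.fib n := by
  induction n using Nat.twoStepInduction with
  | zero => simp
  | one => simp
  | more n ih ih' => rw [bF_add_two, ih, ih', Nat.fib_add_two]; push_cast; ring

theorem bF_Xv_Yv_ne_zero {n : ℕ} (hn : n ≠ 0) : bF Xv Yv n ≠ 0 := by
  have hfib : eval (fun _ => (1 : ℚ)) (fibPoly n) ≠ 0 := by
    rw [map_fibPoly, eval_X, eval_X, bF_one_one]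
    exact_mod_cast (Nat.fib_pos.mpr (Nat.pos_of_ne_zero hn)).ne'
  rw [Xv, Yv, ← map_fibPoly, map_ne_zero_iff _ (IsFractionRing.injective _ RF2)]
  exact ne_of_apply_ne _ (hfib.trans_eq (map_zero _).symm)

theorem fibo_pascal_recurrence_general (s n k : ℕ) (hs : 1 ≤ s)
    (hk1 : 1 ≤ k) (hk2 : k ≤ n - 1) :
    fibo Xv Yv s n k =
      bF Xv Yv (s * (n - k) + 1) * fibo Xv Yv s (n - 1) (k - 1) +
        Yv * bF Xv Yv (s * k - 1) * fibo Xv Yv s (n - 1) k := by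
  obtain ⟨j, rfl⟩ : ∃ j, k = j + 1 := ⟨k - 1, by omega⟩
  obtain ⟨m, rfl⟩ : ∃ m, n = m + 1 := ⟨n - 1, by omega⟩
  rw [Nat.add_sub_cancel, Nat.add_sub_cancel, Nat.add_sub_add_right]
  exact fibo_succ_pascal Xv Yv (by omega) fun i _ =>
    bF_Xv_Yv_ne_zero (Nat.mul_ne_zero (by omega) (Nat.succ_ne_zero i))

/-- Pascal-type recurrence:
C(n,k)_{F_s} = F_{s(n−k)+1}·C(n−1,k−1)_{F_s} + y·F_{sk−1}·C(n−1,k)_{F_s}. -/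
theorem fibo_pascal_recurrence (s n k : ℕ) (hs : 1 ≤ s) (hn : 1 ≤ n)
    (hk1 : 1 ≤ k) (hk2 : k ≤ n - 1) :
    fibo Xv Yv s n k =
      bF Xv Yv (s * (n - k) + 1) * fibo Xv Yv s (n - 1) (k - 1) +
        Yv * bF Xv Yv (s * k - 1) * fibo Xv Yv s (n - 1) k :=
  fibo_pascal_recurrence_general s n k hs hk1 hk2
end

section
/- Let α = (x + √(x²+4y))/2 and β = (x − √(x²+4y))/2 (in a suitable extension, or work formally). For every s ≥ 1 and k ≥ 0, (−1)^{s+1} ∏_{j=0}^{k} ( z − α^{sj} β^{s(k−j)} ) = Σ_{i=0}^{k+1} (−1)^{(si+2(s+1))(i+1)/2} · C(k+1,i)_{F_s(x,y)} · y^{si(i−1)/2} · z^{k+1−i}, where C(m,i)_{F_s} denotes the bivariate s-Fibopolynomial coefficient. -/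
/-- The field ℚ(α,β,z) of rational functions in three variables. -/
noncomputable abbrev RF3 : Type := FractionRing (MvPolynomial (Fin 3) ℚ)

noncomputable def av : RF3 := algebraMap (MvPolynomial (Fin 3) ℚ) RF3 (MvPolynomial.X 0)
noncomputable def bv : RF3 := algebraMap (MvPolynomial (Fin 3) ℚ) RF3 (MvPolynomial.X 1)
noncomputable def zv : RF3 := algebraMap (MvPolynomial (Fin 3) ℚ) RF3 (MvPolynomial.X 2)

/-!
Put `a = αˢ`, `b = βˢ`. Since `Fₙ · (α - β) = αⁿ - βⁿ`, the s-Fibopolynomial `C(n,i)_{F_s}` is the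
Gaussian-type coefficient `[n,i]_{a,b} = ∏_{j<i} (a^{n-j} - b^{n-j}) / ∏_{j<i} (a^{j+1} - b^{j+1})`,
so up to signs the identity is the `(a,b)`-binomial theorem
`∏_{j<n} (z - c aʲ b^{n-1-j}) = ∑ᵢ (-1)ⁱ [n,i]_{a,b} (ab)^{C(i,2)} cⁱ z^{n-i}`.
This is proved by induction on `n`: splitting off the factor `j = n` leaves the same product with
`c` replaced by `cb`, and multiplying by `z - c aⁿ` produces exactly the Pascal rule
`[n+1,i+1] = b^{i+1} [n,i+1] + a^{n-i} [n,i]`. The stated sign `(-1)^{(si+2(s+1))(i+1)/2}` times the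
sign of `y^{s C(i,2)} = (-αβ)^{s C(i,2)}` is `(-1)^{s+1} (-1)ⁱ`.
-/

open Finset

lemma bF_mul_sub {K : Type*} [Field K] (a b : K) (n : ℕ) :
    bF (a + b) (-(a * b)) n * (a - b) = a ^ n - b ^ n := by
  induction n using Nat.twoStepInduction with
  | zero => simp [bF]
  | one => simp [bF]
  | more n ih₀ ih₁ =>
    simp only [bF]
    linear_combination (a + b) * ih₁ - a * b * ih₀

noncomputable def gaussianBinom {K : Type*} [Field K] (a b : K) (n i : ℕ) : K :=
  (∏ j ∈ range i, (a ^ (n - j) - b ^ (n - j))) / ∏ j ∈ range i, (a ^ (j + 1) - b ^ (j + 1))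

section GaussianBinom

variable {K : Type*} [Field K]

@[simp]
lemma gaussianBinom_zero_right (a b : K) (n : ℕ) : gaussianBinom a b n 0 = 1 := by
  simp [gaussianBinom]

lemma gaussianBinom_succ_self (a b : K) (n : ℕ) : gaussianBinom a b n (n + 1) = 0 := by
  rw [gaussianBinom, prod_eq_zero (self_mem_range_succ n) (by simp), zero_div]

lemma gaussianBinom_succ_succ {a b : K} (h : ∀ m, 0 < m → a ^ m ≠ b ^ m) {n i : ℕ} (hi : i ≤ n) :
    gaussianBinom a b (n + 1) (i + 1) =
      b ^ (i + 1) * gaussianBinom a b n (i + 1) + a ^ (n - i) * gaussianBinom a b n i := by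
  obtain ⟨m, rfl⟩ := Nat.exists_eq_add_of_le hi
  have hden : ∏ j ∈ range i, (a ^ (j + 1) - b ^ (j + 1)) ≠ 0 :=
    prod_ne_zero_iff.mpr fun j _ => sub_ne_zero.mpr (h _ j.succ_pos)
  have hlast : a ^ (i + 1) - b ^ (i + 1) ≠ 0 := sub_ne_zero.mpr (h _ i.succ_pos)
  simp only [gaussianBinom]
  rw [prod_range_succ' (fun j => a ^ (i + m + 1 - j) - b ^ (i + m + 1 - j)),
    prod_range_succ (fun j => a ^ (i + m - j) - b ^ (i + m - j)), prod_range_succ]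
  simp only [Nat.add_sub_add_right, Nat.sub_zero, Nat.add_sub_cancel_left]
  field_simp
  ring

end GaussianBinom

lemma sum_mul_sub_eq_sum {R : Type*} [CommRing R] {f g : ℕ → R} {n : ℕ} {w : R}
    (h₀ : g 0 = f 0) (hsucc : ∀ i ≤ n, g (i + 1) = f (i + 1) - w * f i) (hlast : f (n + 1) = 0)
    (z : R) :
    (∑ i ∈ range (n + 1), f i * z ^ (n - i)) * (z - w) =
      ∑ i ∈ range (n + 2), g i * z ^ (n + 1 - i) := by
  have hshift : (∑ i ∈ range (n + 1), f i * z ^ (n - i)) * z =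
      ∑ i ∈ range (n + 1), f (i + 1) * z ^ (n - i) + f 0 * z ^ (n + 1) :=
    calc (∑ i ∈ range (n + 1), f i * z ^ (n - i)) * z
        = ∑ i ∈ range (n + 2), f i * z ^ (n + 1 - i) := by
          rw [sum_range_succ _ (n + 1), hlast, zero_mul, add_zero, sum_mul]
          refine sum_congr rfl fun i hi => ?_
          rw [mul_assoc, ← pow_succ, Nat.sub_add_comm (mem_range_succ_iff.mp hi)]
      _ = _ := by simp only [sum_range_succ', Nat.add_sub_add_right, Nat.sub_zero]
  have hg : ∑ i ∈ range (n + 1), g (i + 1) * z ^ (n + 1 - (i + 1)) =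
      ∑ i ∈ range (n + 1), (f (i + 1) * z ^ (n - i) - w * (f i * z ^ (n - i))) :=
    sum_congr rfl fun i hi => by
      rw [hsucc i (mem_range_succ_iff.mp hi), Nat.add_sub_add_right]
      ring
  rw [sum_range_succ' (fun i => g i * z ^ (n + 1 - i)), hg, sum_sub_distrib, ← mul_sum, h₀,
    mul_sub, hshift, Nat.sub_zero]
  ring

theorem prod_sub_eq_sum_gaussianBinom {K : Type*} [Field K] {a b : K}
    (h : ∀ m, 0 < m → a ^ m ≠ b ^ m) (n : ℕ) (c z : K) :
    ∏ j ∈ range n, (z - c * a ^ j * b ^ (n - 1 - j)) =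
      ∑ i ∈ range (n + 1),
        (-1) ^ i * gaussianBinom a b n i * (a * b) ^ i.choose 2 * c ^ i * z ^ (n - i) := by
  induction n generalizing c with
  | zero => simp
  | succ n ih =>
    have hsplit : ∏ j ∈ range (n + 1), (z - c * a ^ j * b ^ (n + 1 - 1 - j)) =
        (∏ j ∈ range n, (z - c * b * a ^ j * b ^ (n - 1 - j))) * (z - c * a ^ n) := by
      rw [prod_range_succ, Nat.add_sub_cancel, Nat.sub_self, pow_zero, mul_one]
      refine congrArg (· * _) (prod_congr rfl fun j hj => ?_)
      rw [mul_right_comm c b, mul_assoc _ b, ← pow_succ']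
      have := mem_range.mp hj
      congr 3
      omega
    rw [hsplit, ih]
    refine sum_mul_sub_eq_sum (by simp) (fun i hi => ?_) (by simp [gaussianBinom_succ_self]) z
    obtain ⟨m, rfl⟩ := Nat.exists_eq_add_of_le hi
    rw [gaussianBinom_succ_succ h hi, Nat.choose_succ_succ', Nat.choose_one_right,
      Nat.add_sub_cancel_left]
    ring

lemma fibo_eq_gaussianBinom {K : Type*} [Field K] {a b : K} (hab : a ≠ b) (s n i : ℕ) :
    fibo (a + b) (-(a * b)) s n i = gaussianBinom (a ^ s) (b ^ s) n i := by
  have hbinet (m : ℕ) : bF (a + b) (-(a * b)) (s * m) = ((a ^ s) ^ m - (b ^ s) ^ m) / (a - b) := by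
    rw [eq_div_iff (sub_ne_zero.mpr hab), bF_mul_sub, pow_mul, pow_mul]
  simp only [fibo, gaussianBinom, hbinet, prod_div_distrib]
  exact div_div_div_cancel_right₀ (prod_ne_zero_iff.mpr fun _ _ => sub_ne_zero.mpr hab) _ _

lemma av_pow_ne_bv_pow {m : ℕ} (hm : m ≠ 0) : av ^ m ≠ bv ^ m := by
  intro h
  have hX : (MvPolynomial.X 0 : MvPolynomial (Fin 3) ℚ) ^ m = MvPolynomial.X 1 ^ m :=
    IsFractionRing.injective _ RF3 (by rw [map_pow, map_pow]; exact h)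
  simpa [hm] using congrArg (MvPolynomial.eval (Pi.single 0 1)) hX

lemma neg_one_pow_fibopolynomial_sign {R : Type*} [Monoid R] [HasDistribNeg R] (s i : ℕ) :
    (-1 : R) ^ ((s * i + 2 * (s + 1)) * (i + 1) / 2) * (-1) ^ (s * i * (i - 1) / 2) =
      (-1) ^ (s + 1) * (-1) ^ i := by
  obtain ⟨q, hq⟩ := (Nat.even_mul_pred_self i).two_dvd
  have hsucc_mul : (i + 1) * i = 2 * (q + i) := by
    cases i with
    | zero => simp at hq; omega
    | succ j => rw [Nat.add_sub_cancel] at hq; linarith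
  have h₁ : (s * i + 2 * (s + 1)) * (i + 1) / 2 = s * (q + i) + (s + 1) * (i + 1) := by
    rw [← Nat.mul_div_cancel_left (s * (q + i) + (s + 1) * (i + 1)) two_pos]
    congr 1
    calc (s * i + 2 * (s + 1)) * (i + 1) = s * ((i + 1) * i) + 2 * ((s + 1) * (i + 1)) := by ring
      _ = _ := by rw [hsucc_mul]; ring
  have h₂ : s * i * (i - 1) / 2 = s * q := by
    rw [mul_assoc, hq, mul_left_comm, Nat.mul_div_cancel_left _ two_pos]
  rw [h₁, h₂, ← pow_add, show s * (q + i) + (s + 1) * (i + 1) + s * q =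
    2 * (s * q + s * i) + (s + 1 + i) by ring, pow_add, pow_mul, neg_one_sq, one_pow, one_mul,
    pow_add]

/-- With α + β = x and αβ = −y (here formally: x := α+β, y := −αβ),
(−1)^{s+1} ∏_{j=0}^{k} (z − α^{sj} β^{s(k−j)})
  = Σ_{i=0}^{k+1} (−1)^{(si+2(s+1))(i+1)/2} C(k+1,i)_{F_s(x,y)} y^{si(i−1)/2} z^{k+1−i}. -/
theorem fibopolynomial_root_factorization (s k : ℕ) (hs : 1 ≤ s) :
    (-1 : RF3) ^ (s + 1) *
        ∏ j ∈ Finset.range (k + 1), (zv - av ^ (s * j) * bv ^ (s * (k - j))) =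
      ∑ i ∈ Finset.range (k + 2),
        (-1 : RF3) ^ (((s * i + 2 * (s + 1)) * (i + 1)) / 2) *
          fibo (av + bv) (-(av * bv)) s (k + 1) i *
            (-(av * bv)) ^ ((s * i * (i - 1)) / 2) * zv ^ (k + 1 - i) := by
  have hpow (m : ℕ) (hm : 0 < m) : (av ^ s) ^ m ≠ (bv ^ s) ^ m := by
    simpa only [← pow_mul] using av_pow_ne_bv_pow (Nat.mul_ne_zero (by omega) hm.ne')
  have hprod := prod_sub_eq_sum_gaussianBinom hpow (k + 1) 1 zv
  simp only [one_mul, one_pow, mul_one, Nat.add_sub_cancel, ← pow_mul] at hprod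
  rw [hprod, mul_sum]
  refine sum_congr rfl fun i _ => ?_
  have hexp : s * i * (i - 1) / 2 = s * i.choose 2 := by
    rw [Nat.choose_two_right, mul_assoc, Nat.mul_div_assoc _ (Nat.even_mul_pred_self i).two_dvd]
  have hsign := neg_one_pow_fibopolynomial_sign (R := RF3) s i
  rw [hexp] at hsign ⊢
  rw [fibo_eq_gaussianBinom (by simpa using av_pow_ne_bv_pow one_ne_zero), neg_pow, pow_mul,
    mul_pow]
  linear_combination (-(gaussianBinom (av ^ s) (bv ^ s) (k + 1) i *
    (av ^ s * bv ^ s) ^ i.choose 2 * zv ^ (k + 1 - i))) * hsign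
end
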